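/- arXiv:2310.16599 — 5 statements merged into one kernel-verified Lean document; each statement's English description precedes it below -/
import Mathlib

section
/- Let $R$ be a commutative noetherian local ring satisfying property (ee): for all finitely generated $R$-modules $M,N$, if $\operatorname{Ext}_R^i(M,N)=0$ for all $i \gg 0$ then $\operatorname{Ext}_R^i(N,M)=0$ for all $i \gg 0$. Then $R$ is Gorenstein. -/
open CategoryTheory IsLocalRing

noncomputable section

/-- The `i`-th Ext group of `R`-modules `M`, `N`, as a `ModuleCat R`. -/
def ExtGroup (R : Type) [CommRing R] (i : ℕ) (M N : ModuleCat.{0} R) : ModuleCat R :=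
  ((Ext R (ModuleCat.{0} R) i).obj (Opposite.op M)).obj N

/-- The `i`-th Tor group. -/
def TorGroup (R : Type) [CommRing R] (i : ℕ) (M N : ModuleCat.{0} R) : ModuleCat R :=
  ((Tor (ModuleCat.{0} R) i).obj M).obj N

/-- `Ext_R^i(M, N) = 0` for all `i ≫ 0`. -/
def ExtEventuallyZero (R : Type) [CommRing R] (M N : ModuleCat.{0} R) : Prop :=
  ∃ t : ℕ, ∀ i > t, Subsingleton (ExtGroup R i M N)

/-- Property (ee). -/
def PropEE (R : Type) [CommRing R] : Prop :=
  ∀ M N : ModuleCat.{0} R, Module.Finite R M → Module.Finite R N →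
    ExtEventuallyZero R M N → ExtEventuallyZero R N M

/-- Gorenstein: `Ext^i(k, R) = 0` for `i ≫ 0`. -/
def IsGorensteinLocalRing (R : Type) [CommRing R] [IsLocalRing R] : Prop :=
  ∃ t : ℕ, ∀ i > t, Subsingleton
    (ExtGroup R i (ModuleCat.of R (ResidueField R)) (ModuleCat.of R R))

open Classical in
/-- depth of a module over a local ring, with depth of zero module = ⊤. -/
def rdepth (R : Type) [CommRing R] [IsLocalRing R]
    (M : Type) [AddCommGroup M] [Module R M] : ℕ∞ :=
  if Subsingleton M then ⊤ else
    sSup {n : ℕ∞ | ∃ rs : List R, (rs.length : ℕ∞) = n ∧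
      (∀ r ∈ rs, r ∈ maximalIdeal R) ∧ RingTheory.Sequence.IsRegular M rs}

/-- Totally reflexive module. -/
def IsTotallyReflexive (R : Type) [CommRing R]
    (M : Type) [AddCommGroup M] [Module R M] : Prop :=
  Module.Finite R M ∧ Function.Bijective (Module.Dual.eval R M) ∧
  (∀ i > 0, Subsingleton (ExtGroup R i (ModuleCat.of R M) (ModuleCat.of R R))) ∧
  (∀ i > 0, Subsingleton
    (ExtGroup R i (ModuleCat.of R (Module.Dual R M)) (ModuleCat.of R R)))

/-- Property (tr). -/
def PropTR (R : Type) [CommRing R] : Prop :=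
  ∀ (M : Type) [AddCommGroup M] [Module R M], Module.Finite R M →
    (∀ i > 0, Subsingleton (ExtGroup R i (ModuleCat.of R M) (ModuleCat.of R R))) →
    IsTotallyReflexive R M

/-- Property (dep): the depth formula (written additively to avoid truncated subtraction). -/
def PropDep (R : Type) [CommRing R] [IsLocalRing R] : Prop :=
  ∀ (M N : Type) [AddCommGroup M] [Module R M] [AddCommGroup N] [Module R N],
    Module.Finite R M → Module.Finite R N → Nontrivial M → Nontrivial N →
    (∀ i > 0, Subsingleton (TorGroup R i (ModuleCat.of R M) (ModuleCat.of R N))) →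
    rdepth R (TensorProduct R M N) + rdepth R R = rdepth R M + rdepth R N

/-- AB ring. -/
def IsABRing (R : Type) [CommRing R] [IsLocalRing R] : Prop :=
  IsGorensteinLocalRing R ∧ ∃ n : ℕ, ∀ M N : ModuleCat.{0} R,
    Module.Finite R M → Module.Finite R N → ExtEventuallyZero R M N →
    ∀ i > n, Subsingleton (ExtGroup R i M N)

/-- A complex of finitely generated projective modules, indexed by `ℤ`. -/
structure FGProjComplex (R : Type) [CommRing R] where
  X : ℤ → Type
  [acg : ∀ n, AddCommGroup (X n)]
  [mod : ∀ n, Module R (X n)]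
  [fin : ∀ n, Module.Finite R (X n)]
  [proj : ∀ n, Module.Projective R (X n)]
  d : ∀ n : ℤ, X n →ₗ[R] X (n + 1)
  dd : ∀ n : ℤ, (d (n + 1)).comp (d n) = 0

attribute [instance] FGProjComplex.acg FGProjComplex.mod FGProjComplex.fin FGProjComplex.proj

/-- Acyclicity of such a complex. -/
def FGProjComplex.Acyclic {R : Type} [CommRing R] (C : FGProjComplex R) : Prop :=
  ∀ n : ℤ, LinearMap.ker (C.d (n + 1)) = LinearMap.range (C.d n)

/-- The dual complex is acyclic. -/
def FGProjComplex.DualAcyclic {R : Type} [CommRing R] (C : FGProjComplex R) : Prop :=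
  ∀ n : ℤ, LinearMap.ker ((C.d n).dualMap) = LinearMap.range ((C.d (n + 1)).dualMap)

/-- Property (tac): every acyclic complex of f.g. projective modules is totally acyclic. -/
def PropTAC (R : Type) [CommRing R] : Prop :=
  ∀ C : FGProjComplex R, C.Acyclic → C.DualAcyclic

/-- `M` is an ∞-syzygy. -/
def IsInfiniteSyzygy (R : Type) [CommRing R]
    (M : Type) [AddCommGroup M] [Module R M] : Prop :=
  Module.Finite R M ∧
  ∃ (k : ℕ → ℕ) (f : M →ₗ[R] (Fin (k 0) → R))
    (d : ∀ n : ℕ, (Fin (k n) → R) →ₗ[R] (Fin (k (n + 1)) → R)),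
    Function.Injective f ∧ LinearMap.ker (d 0) = LinearMap.range f ∧
    ∀ n : ℕ, LinearMap.ker (d (n + 1)) = LinearMap.range (d n)

end

noncomputable section

/-- Minimal `n`-th syzygy: `IsMinimalSyzygy R n M K` says `K` is the `n`-th syzygy of `M`
computed from a minimal free resolution. -/
def IsMinimalSyzygy (R : Type) [CommRing R] [IsLocalRing R] :
    ℕ → ModuleCat.{0} R → ModuleCat.{0} R → Prop
  | 0, M, K => Nonempty (K ≃ₗ[R] M)
  | n + 1, M, K => ∃ (m : ℕ) (f : (Fin m → R) →ₗ[R] M),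
      Function.Surjective f ∧
      (LinearMap.ker f ≤ (maximalIdeal R) • (⊤ : Submodule R (Fin m → R))) ∧
      IsMinimalSyzygy R n (ModuleCat.of R (LinearMap.ker f)) K

/-- A resolving class of modules: contains `R`, closed under isomorphisms, direct summands,
extensions and syzygies. -/
def IsResolvingClass (R : Type) [CommRing R] (P : ModuleCat.{0} R → Prop) : Prop :=
  (P (ModuleCat.of R R)) ∧
  (∀ X Y : ModuleCat.{0} R, Nonempty (X ≃ₗ[R] Y) → P X → P Y) ∧
  (∀ (X Y : ModuleCat.{0} R) (i : X →ₗ[R] Y) (r : Y →ₗ[R] X),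
      r.comp i = LinearMap.id → P Y → P X) ∧
  (∀ (X Y Z : ModuleCat.{0} R) (f : X →ₗ[R] Y) (g : Y →ₗ[R] Z),
      Function.Injective f → Function.Surjective g → LinearMap.ker g = LinearMap.range f →
      P X → P Z → P Y) ∧
  (∀ (X Y : ModuleCat.{0} R) (m : ℕ) (f : (Fin m → R) →ₗ[R] X), Function.Surjective f →
      Nonempty (Y ≃ₗ[R] LinearMap.ker f) → P X → P Y)

/-- `N` belongs to the resolving closure `res M`. -/
def InResolvingClosure (R : Type) [CommRing R] (M N : ModuleCat.{0} R) : Prop :=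
  ∀ P : ModuleCat.{0} R → Prop, IsResolvingClass R P → P M → P N

/-- `M` has finite G-dimension: it admits a finite resolution by totally reflexive modules. -/
def HasFiniteGDim (R : Type) [CommRing R] (M : Type) [AddCommGroup M] [Module R M] : Prop :=
  ∃ (n : ℕ) (T : ℕ → ModuleCat.{0} R) (d : ∀ i : ℕ, T (i + 1) →ₗ[R] T i) (ε : T 0 →ₗ[R] M),
    (∀ i, IsTotallyReflexive R (T i)) ∧ Function.Surjective ε ∧
    LinearMap.ker ε = LinearMap.range (d 0) ∧
    (∀ i, LinearMap.ker (d i) = LinearMap.range (d (i + 1))) ∧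
    (∀ i > n, Subsingleton (T i))

/-- `ω` is a canonical module of the `d`-dimensional Cohen–Macaulay local ring `R`:
`Ext^i(k, ω)` vanishes for `i ≠ d` and is isomorphic to `k` for `i = d`. -/
def IsCanonicalModule (R : Type) [CommRing R] [IsLocalRing R] (d : ℕ)
    (ω : ModuleCat.{0} R) : Prop :=
  Module.Finite R ω ∧
  (∀ i : ℕ, i ≠ d → Subsingleton (ExtGroup R i (ModuleCat.of R (ResidueField R)) ω)) ∧
  Nonempty ((ExtGroup R d (ModuleCat.of R (ResidueField R)) ω) ≃ₗ[R] (ResidueField R))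

/-- Cohen–Macaulay local ring: depth equals Krull dimension. -/
def IsCohenMacaulayLocalRing (R : Type) [CommRing R] [IsLocalRing R] : Prop :=
  (rdepth R R : WithBot ℕ∞) = ringKrullDim R

end

theorem ExtGroup.subsingleton_of_projective {R : Type} [CommRing R]
    (M N : ModuleCat.{0} R) [Projective M] {i : ℕ} (hi : 0 < i) :
    Subsingleton (ExtGroup R i M N) := by
  obtain ⟨j, rfl⟩ : ∃ j, i = j + 1 := ⟨i - 1, by omega⟩
  exact ModuleCat.subsingleton_of_isZero
    (Functor.isZero_leftDerived_obj_projective_succ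
      ((linearYoneda R (ModuleCat.{0} R)).obj N).rightOp j M).unop

theorem extEventuallyZero_of_projective {R : Type} [CommRing R]
    (M N : ModuleCat.{0} R) [Projective M] : ExtEventuallyZero R M N :=
  ⟨0, fun _ hi => ExtGroup.subsingleton_of_projective M N hi⟩

theorem stmt4_general (R : Type) [CommRing R] [IsLocalRing R]
    (h : PropEE R) : IsGorensteinLocalRing R :=
  h (ModuleCat.of R R) (ModuleCat.of R (ResidueField R))
    (inferInstanceAs (Module.Finite R R))
    (inferInstanceAs (Module.Finite R (ResidueField R)))
    (extEventuallyZero_of_projective _ _)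

/-- a local ring satisfying property (ee) is Gorenstein. -/
theorem stmt4 (R : Type) [CommRing R] [IsLocalRing R] [IsNoetherianRing R]
    (h : PropEE R) : IsGorensteinLocalRing R :=
  stmt4_general R h
end

section
/- Let $R \to S$ be a flat local homomorphism of commutative noetherian local rings. If $S$ satisfies property (ee) (for all finitely generated $S$-modules $M,N$, $\operatorname{Ext}_S^{\gg 0}(M,N)=0$ implies $\operatorname{Ext}_S^{\gg 0}(N,M)=0$), then $R$ satisfies property (ee). -/
open CategoryTheory IsLocalRing

/-!
A flat local homomorphism `R → S` is faithfully flat. Resolve a finitely generated `R`-module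
`M` by finitely presented projectives; the base change of this resolution resolves `S ⊗ M`.
Since `Hom` out of a finitely presented module commutes with flat base change, the complex
computing `Ext_S(S ⊗ M, S ⊗ N)` is `S ⊗` the one computing `Ext_R(M, N)`, and faithfully flat
base change reflects exactness. So `Ext_R^i(M, N) = 0` iff `Ext_S^i(S ⊗ M, S ⊗ N) = 0` for
every `i ≥ 1`, and (ee) descends from `S` to `R`.
-/

open TensorProduct

section HomBaseChange

open LinearMap Module

variable {R : Type} [CommRing R] (S : Type) [CommRing S] [Algebra R S]
  {N : Type} [AddCommGroup N] [Module R N]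
  {P₁ P₂ P₃ : Type} [AddCommGroup P₁] [Module R P₁] [FinitePresentation R P₁]
  [AddCommGroup P₂] [Module R P₂] [FinitePresentation R P₂]
  [AddCommGroup P₃] [Module R P₃] [FinitePresentation R P₃]

lemma lcomp_baseChange_comp_equiv [Flat R S] (f : P₂ →ₗ[R] P₁) :
    (lcomp S (S ⊗[R] N) (f.baseChange S)).restrictScalars R ∘ₗ
        ((FinitePresentation.isBaseChange_map R P₁ N S).equiv.restrictScalars R).toLinearMap =
      ((FinitePresentation.isBaseChange_map R P₂ N S).equiv.restrictScalars R).toLinearMap ∘ₗ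
        (lcomp R N f).lTensor S := by
  ext s φ : 3
  simp [IsBaseChange.equiv_tmul, lcomp_apply', baseChange_comp]

lemma exact_lcomp_baseChange_iff [FaithfullyFlat R S] (f : P₂ →ₗ[R] P₁) (g : P₃ →ₗ[R] P₂) :
    Function.Exact (lcomp S (S ⊗[R] N) (f.baseChange S)) (lcomp S (S ⊗[R] N) (g.baseChange S)) ↔
      Function.Exact (lcomp R N f) (lcomp R N g) :=
  (Function.Exact.iff_of_ladder_linearEquiv (lcomp_baseChange_comp_equiv S f)
    (lcomp_baseChange_comp_equiv S g)).trans (FaithfullyFlat.lTensor_exact_iff_exact R S _ _)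

end HomBaseChange

structure FinPresProjResolution (R : Type) [CommRing R] (M : Type) [AddCommGroup M]
    [Module R M] where
  P : ℕ → Type
  [addCommGroup : ∀ n, AddCommGroup (P n)]
  [module : ∀ n, Module R (P n)]
  [projective : ∀ n, Module.Projective R (P n)]
  [finitePresentation : ∀ n, Module.FinitePresentation R (P n)]
  d : ∀ n, P (n + 1) →ₗ[R] P n
  ε : P 0 →ₗ[R] M
  surjective_ε : Function.Surjective ε
  exact_d_ε : Function.Exact (d 0) ε
  exact_d : ∀ n, Function.Exact (d (n + 1)) (d n)

attribute [instance] FinPresProjResolution.addCommGroup FinPresProjResolution.module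
  FinPresProjResolution.projective FinPresProjResolution.finitePresentation

namespace FinPresProjResolution

noncomputable section

variable {R : Type} [CommRing R] {M : Type} [AddCommGroup M] [Module R M]
  (F : FinPresProjResolution R M)

def complex : ChainComplex (ModuleCat.{0} R) ℕ :=
  ChainComplex.of (fun n => ModuleCat.of R (F.P n)) (fun n => ModuleCat.ofHom (F.d n))
    (fun n => ModuleCat.hom_ext (F.exact_d n).linearMap_comp_eq_zero)

lemma complex_d (n : ℕ) : F.complex.d (n + 1) n = ModuleCat.ofHom (F.d n) :=
  ChainComplex.of_d (fun n => ModuleCat.of R (F.P n)) (fun n => ModuleCat.ofHom (F.d n)) n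

def π : F.complex ⟶ (ChainComplex.single₀ (ModuleCat.{0} R)).obj (ModuleCat.of R M) :=
  (ChainComplex.toSingle₀Equiv _ _).symm ⟨ModuleCat.ofHom F.ε, by
    rw [complex_d]; exact ModuleCat.hom_ext F.exact_d_ε.linearMap_comp_eq_zero⟩

lemma π_f_zero : F.π.f 0 = ModuleCat.ofHom F.ε :=
  ChainComplex.toSingle₀Equiv_symm_apply_f_zero _ _

lemma complex_exactAt_succ (n : ℕ) : F.complex.ExactAt (n + 1) := by
  rw [F.complex.exactAt_iff' (n + 2) (n + 1) n (by simp) (by simp),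
    ShortComplex.ShortExact.moduleCat_exact_iff_function_exact]
  change Function.Exact (F.complex.d (n + 2) (n + 1)) (F.complex.d (n + 1) n)
  rw [complex_d, complex_d]
  exact F.exact_d n

def toProjectiveResolution : ProjectiveResolution (ModuleCat.of R M) where
  complex := F.complex
  π := F.π
  projective n := inferInstanceAs (Projective (ModuleCat.of R (F.P n)))
  quasiIso := ⟨fun n => by
    cases n with
    | zero =>
      rw [ChainComplex.quasiIsoAt₀_iff, ShortComplex.quasiIso_iff_of_zeros' _ rfl rfl rfl]
      refine ⟨?_, (ModuleCat.epi_iff_surjective _).mpr ?_⟩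
      · rw [ShortComplex.ShortExact.moduleCat_exact_iff_function_exact]
        change Function.Exact (F.complex.d 1 0) (F.π.f 0)
        rw [complex_d, π_f_zero]
        exact F.exact_d_ε
      · change Function.Surjective (F.π.f 0)
        rw [π_f_zero]
        exact F.surjective_ε
    | succ n =>
      rw [quasiIsoAt_iff_exactAt' _ _ (ChainComplex.exactAt_succ_single_obj _ _)]
      exact F.complex_exactAt_succ n⟩

theorem subsingleton_extGroup_succ_iff (N : Type) [AddCommGroup N] [Module R N] (n : ℕ) :
    Subsingleton (ExtGroup R (n + 1) (ModuleCat.of R M) (ModuleCat.of R N)) ↔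
      Function.Exact (LinearMap.lcomp R N (F.d n)) (LinearMap.lcomp R N (F.d (n + 1))) := by
  set K := F.complex.linearYonedaObj R (ModuleCat.of R N)
  have hK (i : ℕ) : LinearMap.lcomp R N (F.d i) ∘ₗ ModuleCat.homLinearEquiv.toLinearMap =
      ModuleCat.homLinearEquiv.toLinearMap ∘ₗ (K.d i (i + 1)).hom := by
    ext φ x
    simp only [K, ChainComplex.linearYonedaObj_d, complex_d]
    rfl
  rw [← ModuleCat.isZero_iff_subsingleton, ExtGroup,
    (F.toProjectiveResolution.isoExt (n + 1) (ModuleCat.of R N)).isZero_iff,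
    ← HomologicalComplex.exactAt_iff_isZero_homology,
    HomologicalComplex.exactAt_iff' _ n (n + 1) (n + 2) (by simp) (by simp),
    ShortComplex.ShortExact.moduleCat_exact_iff_function_exact]
  exact (Function.Exact.iff_of_ladder_linearEquiv (hK n) (hK (n + 1))).symm

def baseChange (S : Type) [CommRing S] [Algebra R S] [Module.Flat R S] :
    FinPresProjResolution S (S ⊗[R] M) where
  P n := S ⊗[R] F.P n
  d n := (F.d n).baseChange S
  ε := F.ε.baseChange S
  surjective_ε := LinearMap.lTensor_surjective S F.surjective_ε
  exact_d_ε := Module.Flat.lTensor_exact S F.exact_d_ε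
  exact_d n := Module.Flat.lTensor_exact S (F.exact_d n)

end

end FinPresProjResolution

theorem FinPresProjResolution.subsingleton_extGroup_baseChange_iff {R : Type} [CommRing R]
    {M : Type} [AddCommGroup M] [Module R M] (F : FinPresProjResolution R M)
    (S : Type) [CommRing S] [Algebra R S] [Module.FaithfullyFlat R S]
    (N : Type) [AddCommGroup N] [Module R N] (n : ℕ) :
    Subsingleton (ExtGroup S (n + 1) (ModuleCat.of S (S ⊗[R] M)) (ModuleCat.of S (S ⊗[R] N))) ↔
      Subsingleton (ExtGroup R (n + 1) (ModuleCat.of R M) (ModuleCat.of R N)) := by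
  rw [(F.baseChange S).subsingleton_extGroup_succ_iff, F.subsingleton_extGroup_succ_iff]
  exact exact_lcomp_baseChange_iff S (F.d n) (F.d (n + 1))

section Syzygy

variable (R : Type) [CommRing R]

noncomputable def finFreeCover (X : Type) [AddCommGroup X] [Module R X] [Module.Finite R X] :
    Σ k : ℕ, (Fin k → R) →ₗ[R] X :=
  ⟨_, (Module.Finite.exists_fin' R X).choose_spec.choose⟩

lemma finFreeCover_surjective (X : Type) [AddCommGroup X] [Module R X] [Module.Finite R X] :
    Function.Surjective (finFreeCover R X).2 :=
  (Module.Finite.exists_fin' R X).choose_spec.choose_spec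

variable [IsNoetherianRing R]

lemma exact_subtype_comp_finFreeCover (X : Type) [AddCommGroup X] [Module R X]
    [Module.Finite R X] :
    Function.Exact ((LinearMap.ker (finFreeCover R X).2).subtype ∘ₗ
      (finFreeCover R (LinearMap.ker (finFreeCover R X).2)).2) (finFreeCover R X).2 :=
  (finFreeCover_surjective R _).comp_exact_iff_exact.mpr (LinearMap.exact_subtype_ker_map _)

variable (M : Type) [AddCommGroup M] [Module R M] [Module.Finite R M]

/-- The `n`-th entry is the kernel of `P n → P (n - 1)` (of `P 0 → M` for `n = 0`) in the
resolution built below, a submodule of `P n = Fin k → R`. -/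
noncomputable def finFreeSyzygy : ℕ → Σ k : ℕ, Submodule R (Fin k → R)
  | 0 => ⟨_, LinearMap.ker (finFreeCover R M).2⟩
  | n + 1 => ⟨_, LinearMap.ker (finFreeCover R (finFreeSyzygy n).2).2⟩

theorem FinPresProjResolution.nonempty : Nonempty (FinPresProjResolution R M) :=
  let K := finFreeSyzygy R M
  ⟨{P n := Fin (K n).1 → R
    d n := (K n).2.subtype ∘ₗ (finFreeCover R (K n).2).2
    ε := (finFreeCover R M).2
    surjective_ε := finFreeCover_surjective R M
    exact_d_ε := exact_subtype_comp_finFreeCover R M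
    exact_d n := (K n).2.injective_subtype.comp_exact_iff_exact.mpr
      (exact_subtype_comp_finFreeCover R (K n).2) }⟩

end Syzygy

theorem extEventuallyZero_baseChange_iff {R : Type} [CommRing R] [IsNoetherianRing R]
    (S : Type) [CommRing S] [Algebra R S] [Module.FaithfullyFlat R S]
    (M N : Type) [AddCommGroup M] [Module R M] [Module.Finite R M] [AddCommGroup N] [Module R N] :
    ExtEventuallyZero S (ModuleCat.of S (S ⊗[R] M)) (ModuleCat.of S (S ⊗[R] N)) ↔
      ExtEventuallyZero R (ModuleCat.of R M) (ModuleCat.of R N) := by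
  obtain ⟨F⟩ := FinPresProjResolution.nonempty R M
  refine exists_congr fun t => forall₂_congr fun i hi => ?_
  obtain ⟨n, rfl⟩ := Nat.exists_eq_add_one_of_ne_zero (Nat.ne_zero_of_lt hi)
  exact F.subsingleton_extGroup_baseChange_iff S N n

theorem stmt5_general (R S : Type) [CommRing R] [IsLocalRing R] [IsNoetherianRing R]
    [CommRing S] [IsLocalRing S]
    [Algebra R S] [Module.Flat R S] [IsLocalHom (algebraMap R S)]
    (h : PropEE S) : PropEE R := by
  have : Module.FaithfullyFlat R S := .of_flat_of_isLocalHom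
  intro M N _ _ hMN
  rw [← extEventuallyZero_baseChange_iff S] at hMN ⊢
  exact h _ _ inferInstance inferInstance hMN

/-- property (ee) descends along a flat local homomorphism. -/
theorem stmt5 (R S : Type) [CommRing R] [IsLocalRing R] [IsNoetherianRing R]
    [CommRing S] [IsLocalRing S] [IsNoetherianRing S]
    [Algebra R S] [Module.Flat R S] [IsLocalHom (algebraMap R S)]
    (h : PropEE S) : PropEE R :=
  stmt5_general R S h
end

section
/- Let $R$ be a commutative noetherian local ring. If every acyclic complex of finitely generated projective $R$-modules is totally acyclic, then every finitely generated $R$-module $M$ with $\operatorname{Ext}_R^i(M,R)=0$ for all $i>0$ is totally reflexive. -/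
open CategoryTheory IsLocalRing

/-!
Resolve `M` and `M* = Hom(M, R)` by finite free modules, `F → M` and `G → M*`, and splice them
along `G₀ ↠ M* ↪ F₀*` into the complex `⋯ → G₁ → G₀ → F₀* → F₁* → ⋯`. It is acyclic: at `F₀*`
because `M*` is the kernel of `F₀* → F₁*`, and further right because exactness of `F*` at `F_{i}*`
is `Ext^{i}(M, R) = 0`. By hypothesis its dual `⋯ → F₁ → F₀ → G₀* → G₁* → ⋯` is acyclic as well;
exactness at `F₀` and at `G₀*` says that `M → M**` is injective and surjective, and exactness
along `G*` is `Ext^{>0}(M*, R) = 0`.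
-/

open CategoryTheory Function LinearMap Module

section DualExact

variable {R : Type*} [CommRing R] {A B C : Type*} [AddCommGroup A] [Module R A]
  [AddCommGroup B] [Module R B] [AddCommGroup C] [Module R C]

theorem Function.Exact.dualMap {f : A →ₗ[R] B} {g : B →ₗ[R] C} (h : Exact f g)
    (hg : Surjective g) : Exact g.dualMap f.dualMap :=
  exact_lcomp_of_exact_of_surjective R h hg

theorem dualMap_comp_dualMap_eq_zero {f : A →ₗ[R] B} {g : B →ₗ[R] C} (h : g ∘ₗ f = 0) :
    f.dualMap ∘ₗ g.dualMap = 0 := by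
  rw [dualMap_comp_dualMap, h]
  exact LinearMap.ext fun φ => LinearMap.ext fun _ => map_zero φ

end DualExact

section DoubleDual

variable {R : Type*} [CommRing R] {M F₀ F₁ G₀ G₁ : Type*} [AddCommGroup M] [Module R M]
  [AddCommGroup F₀] [Module R F₀] [AddCommGroup F₁] [Module R F₁]
  [AddCommGroup G₀] [Module R G₀] [AddCommGroup G₁] [Module R G₁]

theorem injective_dual_eval_of_exact [IsReflexive R F₀] [IsReflexive R F₁]
    {d : F₁ →ₗ[R] F₀} {ε : F₀ →ₗ[R] M} (hε : Surjective ε) (hdε : Exact d ε)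
    (η : G₀ →ₗ[R] Dual R M) (h : Exact d.dualMap.dualMap (ε.dualMap ∘ₗ η).dualMap) :
    Injective (Dual.eval R M) := by
  refine (injective_iff_map_eq_zero _).mpr fun x hx => ?_
  obtain ⟨y, rfl⟩ := hε x
  have hy : (ε.dualMap ∘ₗ η).dualMap (Dual.eval R F₀ y) = 0 :=
    LinearMap.ext fun g => LinearMap.congr_fun hx (η g)
  obtain ⟨z, hz⟩ := (h _).mp hy
  obtain ⟨w, rfl⟩ := (bijective_dual_eval R F₁).2 z
  obtain rfl : d w = y := (bijective_dual_eval R F₀).1 hz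
  exact hdε.apply_apply_eq_zero w

theorem surjective_dual_eval_of_exact [IsReflexive R F₀] (ε : F₀ →ₗ[R] M)
    {d : G₁ →ₗ[R] G₀} {η : G₀ →ₗ[R] Dual R M} (hη : Surjective η) (hdη : Exact d η)
    (h : Exact (ε.dualMap ∘ₗ η).dualMap d.dualMap) :
    Surjective (Dual.eval R M) := by
  intro w
  have hw : d.dualMap (η.dualMap w) = 0 :=
    LinearMap.congr_fun (dualMap_comp_dualMap_eq_zero hdη.linearMap_comp_eq_zero) w
  obtain ⟨z, hz⟩ := (h _).mp hw
  obtain ⟨y, rfl⟩ := (bijective_dual_eval R F₀).2 z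
  exact ⟨ε y, dualMap_injective_of_surjective hη hz⟩

end DoubleDual

structure FinFreeResolution (R : Type*) [CommRing R] (M : Type*) [AddCommGroup M] [Module R M] where
  rank : ℕ → ℕ
  d : ∀ n, (Fin (rank (n + 1)) → R) →ₗ[R] (Fin (rank n) → R)
  ε : (Fin (rank 0) → R) →ₗ[R] M
  surjective_ε : Surjective ε
  exact_zero : Exact (d 0) ε
  exact_succ : ∀ n, Exact (d (n + 1)) (d n)

namespace FinFreeResolution

section Existence

variable {R : Type*} [CommRing R] [IsNoetherianRing R]

theorem exists_linearMap_range_eq {k : ℕ} (S : Submodule R (Fin k → R)) :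
    ∃ (m : ℕ) (f : (Fin m → R) →ₗ[R] (Fin k → R)), range f = S := by
  obtain ⟨m, f, hf⟩ := Module.Finite.exists_fin' R S
  exact ⟨m, S.subtype ∘ₗ f, by rw [range_comp, range_eq_top.mpr hf, Submodule.map_top,
    Submodule.range_subtype]⟩

noncomputable def coverRank {k : ℕ} (S : Submodule R (Fin k → R)) : ℕ :=
  (exists_linearMap_range_eq S).choose

noncomputable def cover {k : ℕ} (S : Submodule R (Fin k → R)) :
    (Fin (coverRank S) → R) →ₗ[R] (Fin k → R) :=
  (exists_linearMap_range_eq S).choose_spec.choose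

theorem range_cover {k : ℕ} (S : Submodule R (Fin k → R)) : range (cover S) = S :=
  (exists_linearMap_range_eq S).choose_spec.choose_spec

-- Reducible, so that instance search sees through the ranks of `ofSurjective`.
@[reducible] noncomputable def syzygy {k₀ : ℕ} (S₀ : Submodule R (Fin k₀ → R)) :
    ℕ → Σ k : ℕ, Submodule R (Fin k → R)
  | 0 => ⟨k₀, S₀⟩
  | n + 1 => ⟨coverRank (syzygy S₀ n).2, ker (cover (syzygy S₀ n).2)⟩

noncomputable def ofSurjective {M : Type*} [AddCommGroup M] [Module R M] {k₀ : ℕ}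
    (ε : (Fin k₀ → R) →ₗ[R] M) (hε : Surjective ε) : FinFreeResolution R M where
  rank n := (syzygy (ker ε) n).1
  d n := cover (syzygy (ker ε) n).2
  ε := ε
  surjective_ε := hε
  exact_zero := LinearMap.exact_iff.mpr (range_cover (ker ε)).symm
  exact_succ n := LinearMap.exact_iff.mpr (range_cover (syzygy (ker ε) (n + 1)).2).symm

theorem nonempty (M : Type*) [AddCommGroup M] [Module R M] [Module.Finite R M] :
    Nonempty (FinFreeResolution R M) :=
  let ⟨_, ε, hε⟩ := Module.Finite.exists_fin' R M
  ⟨ofSurjective ε hε⟩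

end Existence

section Homology

variable {R : Type} [CommRing R] {M : Type} [AddCommGroup M] [Module R M]
  (F : FinFreeResolution R M)

def complex : ChainComplex (ModuleCat.{0} R) ℕ :=
  ChainComplex.of (fun n => ModuleCat.of R (Fin (F.rank n) → R))
    (fun n => ModuleCat.ofHom (F.d n))
    (fun n => ModuleCat.hom_ext (F.exact_succ n).linearMap_comp_eq_zero)

theorem complex_d (n : ℕ) : F.complex.d (n + 1) n = ModuleCat.ofHom (F.d n) := by
  simp [complex]

noncomputable def projectiveResolution : ProjectiveResolution (ModuleCat.of R M) where
  complex := F.complex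
  projective n := (IsProjective.iff_projective (P := Fin (F.rank n) → R)).mp inferInstance
  π := (ChainComplex.toSingle₀Equiv _ _).symm ⟨ModuleCat.ofHom F.ε, by
    rw [complex_d]
    exact ModuleCat.hom_ext F.exact_zero.linearMap_comp_eq_zero⟩
  quasiIso := ⟨fun n => by
    cases n with
    | zero =>
      rw [ChainComplex.quasiIsoAt₀_iff, ShortComplex.quasiIso_iff_of_zeros']
      · refine ⟨?_, (ModuleCat.epi_iff_surjective _).mpr F.surjective_ε⟩
        rw [ShortComplex.ShortExact.moduleCat_exact_iff_function_exact]
        simp only [HomologicalComplex.shortComplexFunctor'_obj_f,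
          HomologicalComplex.shortComplexFunctor'_map_τ₂, complex_d]
        exact F.exact_zero
      all_goals rfl
    | succ n =>
      rw [quasiIsoAt_iff_exactAt' _ _ (ChainComplex.exactAt_succ_single_obj _ _),
        HomologicalComplex.exactAt_iff' _ (n + 2) (n + 1) n (by simp) (by simp),
        ShortComplex.ShortExact.moduleCat_exact_iff_function_exact]
      simp only [HomologicalComplex.sc', HomologicalComplex.shortComplexFunctor'_obj_f,
        HomologicalComplex.shortComplexFunctor'_obj_g, complex_d]
      exact F.exact_succ n⟩

theorem subsingleton_ext_succ_iff (i : ℕ) :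
    Subsingleton (ExtGroup R (i + 1) (ModuleCat.of R M) (ModuleCat.of R R)) ↔
      Exact (F.d i).dualMap (F.d (i + 1)).dualMap := by
  rw [← ModuleCat.isZero_iff_subsingleton, ExtGroup,
    (F.projectiveResolution.isoExt (i + 1) _).isZero_iff,
    ← HomologicalComplex.exactAt_iff_isZero_homology,
    HomologicalComplex.exactAt_iff' _ i (i + 1) (i + 2) (by simp) (by simp),
    ShortComplex.ShortExact.moduleCat_exact_iff_function_exact]
  refine (Exact.iff_of_ladder_linearEquiv (e₁ := ModuleCat.homLinearEquiv)
    (e₂ := ModuleCat.homLinearEquiv) (e₃ := ModuleCat.homLinearEquiv) ?_ ?_).symm <;>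
  · ext φ
    simp only [projectiveResolution, HomologicalComplex.shortComplexFunctor'_obj_f,
      HomologicalComplex.shortComplexFunctor'_obj_g, ChainComplex.linearYonedaObj_d, complex_d]
    rfl

end Homology

section Splice

variable {R : Type} [CommRing R] {M : Type} [AddCommGroup M] [Module R M]
  (F : FinFreeResolution R M) (G : FinFreeResolution R (Dual R M))

def spliceObj : ℤ → Type
  | .ofNat i => Dual R (Fin (F.rank i) → R)
  | .negSucc j => Fin (G.rank j) → R

def splice : FGProjComplex R where
  X := spliceObj F G
  acg
    | .ofNat _ => inferInstanceAs (AddCommGroup (Dual R _))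
    | .negSucc _ => inferInstanceAs (AddCommGroup (_ → R))
  mod
    | .ofNat _ => inferInstanceAs (Module R (Dual R _))
    | .negSucc _ => inferInstanceAs (Module R (_ → R))
  fin
    | .ofNat _ => inferInstanceAs (Module.Finite R (Dual R (_ → R)))
    | .negSucc _ => inferInstanceAs (Module.Finite R (_ → R))
  proj
    | .ofNat _ => inferInstanceAs (Module.Projective R (Dual R (_ → R)))
    | .negSucc _ => inferInstanceAs (Module.Projective R (_ → R))
  d
    | .ofNat i => (F.d i).dualMap
    | .negSucc 0 =>
      -- ascribed, since the target degree `Int.negSucc 0 + 1` is `0` only after unfolding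
      (F.ε.dualMap ∘ₗ G.ε : (Fin (G.rank 0) → R) →ₗ[R] Dual R (Fin (F.rank 0) → R))
    | .negSucc (j + 1) => G.d j
  dd
    | .ofNat i => dualMap_comp_dualMap_eq_zero (F.exact_succ i).linearMap_comp_eq_zero
    | .negSucc 0 => by
      show (F.d 0).dualMap ∘ₗ F.ε.dualMap ∘ₗ G.ε = 0
      rw [← LinearMap.comp_assoc,
        dualMap_comp_dualMap_eq_zero F.exact_zero.linearMap_comp_eq_zero, LinearMap.zero_comp]
    | .negSucc 1 => by
      show (F.ε.dualMap ∘ₗ G.ε) ∘ₗ G.d 0 = 0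
      rw [LinearMap.comp_assoc, G.exact_zero.linearMap_comp_eq_zero, LinearMap.comp_zero]
    | .negSucc (j + 2) => (G.exact_succ j).linearMap_comp_eq_zero

theorem splice_acyclic
    (hExt : ∀ i > 0, Subsingleton (ExtGroup R i (ModuleCat.of R M) (ModuleCat.of R R))) :
    (F.splice G).Acyclic := by
  intro n
  rw [← LinearMap.exact_iff]
  match n with
  | .ofNat i => exact (F.subsingleton_ext_succ_iff i).mp (hExt (i + 1) i.succ_pos)
  | .negSucc 0 =>
    show Exact (F.ε.dualMap ∘ₗ G.ε) (F.d 0).dualMap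
    exact G.surjective_ε.comp_exact_iff_exact.mpr (F.exact_zero.dualMap F.surjective_ε)
  | .negSucc 1 =>
    show Exact (G.d 0) (F.ε.dualMap ∘ₗ G.ε)
    exact (dualMap_injective_of_surjective F.surjective_ε).comp_exact_iff_exact.mpr G.exact_zero
  | .negSucc (j + 2) => exact G.exact_succ j

end Splice

end FinFreeResolution

theorem stmt10_general (R : Type) [CommRing R] [IsNoetherianRing R]
    (h : PropTAC R) : PropTR R := by
  intro M _ _ hfin hext
  obtain ⟨F⟩ := FinFreeResolution.nonempty (R := R) M
  have : Module.Finite R (Dual R M) :=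
    .of_injective F.ε.dualMap (dualMap_injective_of_surjective F.surjective_ε)
  obtain ⟨G⟩ := FinFreeResolution.nonempty (R := R) (Dual R M)
  have hC : (F.splice G).DualAcyclic := h _ (F.splice_acyclic G hext)
  refine ⟨hfin, ⟨injective_dual_eval_of_exact F.surjective_ε F.exact_zero G.ε ?_,
    surjective_dual_eval_of_exact F.ε G.surjective_ε G.exact_zero ?_⟩, hext, ?_⟩
  · exact LinearMap.exact_iff.mpr (hC (.negSucc 0))
  · exact LinearMap.exact_iff.mpr (hC (.negSucc 1))
  · rintro (_ | j) hj
    · exact absurd hj (lt_irrefl 0)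
    · exact (G.subsingleton_ext_succ_iff j).mpr (LinearMap.exact_iff.mpr (hC (.negSucc (j + 2))))

/-- if every acyclic complex of f.g. projectives is totally acyclic,
then `R` satisfies property (tr). -/
theorem stmt10 (R : Type) [CommRing R] [IsLocalRing R] [IsNoetherianRing R]
    (h : PropTAC R) : PropTR R :=
  stmt10_general R h
end

section
/- Let $(R,\mathfrak{m})$ be a commutative noetherian local ring with $\operatorname{depth} R > 0$, and let $M$ be a finitely generated $R$-module with $\operatorname{depth} M > 0$ such that $M_\mathfrak{p}$ is a free $R_\mathfrak{p}$-module for every prime $\mathfrak{p} \neq \mathfrak{m}$. Then $M$ is torsionless, i.e., the natural biduality map $M \to M^{**}$ is injective. -/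
/-!
Let `r ∈ 𝔪` be `M`-regular and let `x ∈ M` be killed by every functional. Over a prime
`𝔭 ≠ 𝔪` the module `M_𝔭` is free, and since `M` is finitely presented every functional on
`M_𝔭` comes, up to a unit, from a functional on `M`; hence `x` vanishes in `M_𝔭`. So the
annihilator of `x` lies in no prime other than `𝔪`, some power of `r` kills `x`, and
regularity of `r` forces `x = 0`.
-/

open CategoryTheory IsLocalRing

theorem exists_mem_maximalIdeal_isSMulRegular_of_rdepth_pos {R : Type} [CommRing R]
    [IsLocalRing R] {M : Type} [AddCommGroup M] [Module R M] (h : 0 < rdepth R M) :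
    ∃ r ∈ maximalIdeal R, IsSMulRegular M r := by
  by_cases hM : Subsingleton M
  · exact ⟨0, zero_mem _, fun a b _ => Subsingleton.elim a b⟩
  rw [rdepth, if_neg hM] at h
  obtain ⟨_, ⟨rs, rfl, hmem, hreg⟩, hpos⟩ := lt_sSup_iff.mp h
  cases rs with
  | nil => simp at hpos
  | cons r rs =>
    exact ⟨r, hmem r List.mem_cons_self,
      ((RingTheory.Sequence.isWeaklyRegular_cons_iff M r rs).mp hreg.toIsWeaklyRegular).1⟩

theorem IsSMulRegular.eq_zero_of_mem_radical_torsionOf {R M : Type*} [CommRing R]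
    [AddCommGroup M] [Module R M] {r : R} (hr : IsSMulRegular M r) {x : M}
    (hrx : r ∈ (Ideal.torsionOf R M x).radical) : x = 0 := by
  obtain ⟨n, hn⟩ := hrx
  exact (hr.pow n) (by simpa using (Ideal.mem_torsionOf_iff x _).mp hn)

theorem IsLocalRing.maximalIdeal_le_radical_of_forall_isPrime {R : Type*} [CommRing R]
    [IsLocalRing R] {I : Ideal R} (h : ∀ p : Ideal R, p.IsPrime → I ≤ p → p = maximalIdeal R) :
    maximalIdeal R ≤ I.radical := by
  rw [Ideal.radical_eq_sInf]
  exact le_sInf fun p ⟨hIp, hp⟩ => (h p hp hIp).ge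

theorem exists_smul_eq_zero_of_forall_dual_apply_eq_zero {R M : Type*} [CommRing R]
    [AddCommGroup M] [Module R M] [Module.FinitePresentation R M] (S : Submonoid R)
    [Module.Projective (Localization S) (LocalizedModule S M)] {x : M}
    (hx : ∀ φ : Module.Dual R M, φ x = 0) : ∃ s : S, s • x = 0 := by
  let f := LocalizedModule.mkLinearMap S M
  let g := Algebra.linearMap R (Localization S)
  have : IsLocalizedModule S g :=
    (isLocalizedModule_iff_isLocalization' S (Localization S)).mpr inferInstance
  -- a functional on `M_S` is, up to a unit of `R_S`, the localization of one on `M`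
  have hdual : ∀ ψ : LocalizedModule S M →ₗ[R] Localization S, ψ (f x) = 0 := by
    intro ψ
    obtain ⟨⟨φ, s⟩, hs⟩ := IsLocalizedModule.surj S (IsLocalizedModule.map S f g) ψ
    have hsψ : s • ψ (f x) = 0 := by
      simpa [IsLocalizedModule.map_apply, hx φ] using LinearMap.congr_fun hs (f x)
    rw [Submonoid.smul_def, Algebra.smul_def] at hsψ
    exact (IsLocalization.map_units (Localization S) s).mul_right_eq_zero.mp hsψ
  have hfx : f x = 0 :=
    (Module.forall_dual_apply_eq_zero_iff (Localization S) (f x)).mp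
      fun ψ => hdual (ψ.restrictScalars R)
  exact (IsLocalizedModule.eq_zero_iff S f).mp hfx

theorem stmt13_general (R : Type) [CommRing R] [IsLocalRing R] [IsNoetherianRing R]
    (M : Type) [AddCommGroup M] [Module R M] (hM : Module.Finite R M)
    (hdepth : 0 < rdepth R M)
    (hloc : ∀ (p : Ideal R) [p.IsPrime], p ≠ maximalIdeal R →
      Module.Free (Localization.AtPrime p) (LocalizedModule p.primeCompl M)) :
    Function.Injective (Module.Dual.eval R M) := by
  have := Module.finitePresentation_of_finite R M
  obtain ⟨r, hrm, hr⟩ := exists_mem_maximalIdeal_isSMulRegular_of_rdepth_pos hdepth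
  refine (injective_iff_map_eq_zero _).mpr fun x hx => hr.eq_zero_of_mem_radical_torsionOf ?_
  refine maximalIdeal_le_radical_of_forall_isPrime (fun p hp hxp => ?_) hrm
  by_contra hpm
  have := hloc p hpm
  obtain ⟨s, hs⟩ := exists_smul_eq_zero_of_forall_dual_apply_eq_zero p.primeCompl
    fun φ => LinearMap.congr_fun hx φ
  exact s.2 (hxp ((Ideal.mem_torsionOf_iff x _).mpr hs))

/-- a finitely generated module of positive depth which is locally free
on the punctured spectrum of a local ring of positive depth is torsionless. -/
theorem stmt13 (R : Type) [CommRing R] [IsLocalRing R] [IsNoetherianRing R]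
    (hR : 0 < rdepth R R)
    (M : Type) [AddCommGroup M] [Module R M] (hM : Module.Finite R M)
    (hdepth : 0 < rdepth R M)
    (hloc : ∀ (p : Ideal R) [p.IsPrime], p ≠ maximalIdeal R →
      Module.Free (Localization.AtPrime p) (LocalizedModule p.primeCompl M)) :
    Function.Injective (Module.Dual.eval R M) :=
  stmt13_general R M hM hdepth hloc
end

section
/- Let $(R,\mathfrak{m})$ be a commutative noetherian local ring and $x \in \mathfrak{m}$ an $R$-regular element. If $M$ is a finitely generated $R/(x)$-module that is an $\infty$-syzygy over $R/(x)$, then the first syzygy $\Omega_R M$ of $M$ as an $R$-module is an $\infty$-syzygy over $R$. -/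
open CategoryTheory IsLocalRing

namespace Stmt19Aux

variable {R : Type} [CommRing R]

noncomputable def pbarMap (I : Ideal R) (b : ℕ) : (Fin b → R) →ₗ[R] (Fin b → R ⧸ I) :=
  LinearMap.pi fun i => (Algebra.linearMap R (R ⧸ I)).comp (LinearMap.proj i)

lemma pbarMap_surjective (I : Ideal R) (b : ℕ) : Function.Surjective (pbarMap I b) := by
  intro w
  choose v hv using fun i => Ideal.Quotient.mk_surjective (I := I) (w i)
  exact ⟨v, funext fun i => hv i⟩

lemma lift_exists (I : Ideal R) (a b : ℕ) (φ : (Fin a → R) →ₗ[R] (Fin b → R ⧸ I)) :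
    ∃ Φ : (Fin a → R) →ₗ[R] (Fin b → R), (pbarMap I b).comp Φ = φ := by
  choose c hc using fun i => pbarMap_surjective I b (φ (Pi.basisFun R (Fin a) i))
  refine ⟨(Pi.basisFun R (Fin a)).constr R c, (Pi.basisFun R (Fin a)).ext fun i => ?_⟩
  rw [LinearMap.comp_apply, Module.Basis.constr_basis]; exact hc i

noncomputable def funSplit (a b : ℕ) : (Fin (a + b) → R) ≃ₗ[R] (Fin a → R) × (Fin b → R) :=
  (LinearEquiv.funCongrLeft R R finSumFinEquiv).trans
    (LinearEquiv.sumArrowLequivProdArrow _ _ R R)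

@[reducible] def pfun (k : ℕ → ℕ) (m : ℕ) : ℕ → ℕ :=
  fun n => Nat.rec m (fun j _ => k j) n

section main

variable (x : R) {M : Type} [AddCommGroup M] [Module R M]
  [Module (R ⧸ Ideal.span {x}) M] [IsScalarTower R (R ⧸ Ideal.span {x}) M]
  (k : ℕ → ℕ) (m : ℕ)
  (fb : M →ₗ[R ⧸ Ideal.span {x}] (Fin (k 0) → R ⧸ Ideal.span {x}))
  (db : ∀ n, (Fin (k n) → R ⧸ Ideal.span {x}) →ₗ[R ⧸ Ideal.span {x}]
      (Fin (k (n + 1)) → R ⧸ Ideal.span {x}))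
  (f : (Fin m → R) →ₗ[R] M)

noncomputable def phiMap :
    ∀ n, (Fin (pfun k m n) → R) →ₗ[R] (Fin (k n) → R ⧸ Ideal.span {x}) :=
  fun n => Nat.rec ((fb.restrictScalars R).comp f)
    (fun j _ => ((db j).restrictScalars R).comp (pbarMap (Ideal.span {x}) (k j))) n

set_option linter.unusedSectionVars false in
set_option maxHeartbeats 1000000 in
set_option synthInstance.maxHeartbeats 200000 in
theorem aux (hreg : x ∈ nonZeroDivisors R)
    (hfb : Function.Injective fb)
    (h0 : LinearMap.ker (db 0) = LinearMap.range fb)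
    (hd : ∀ n, LinearMap.ker (db (n + 1)) = LinearMap.range (db n))
    (hf : Function.Surjective f) :
    ∃ (k' : ℕ → ℕ) (fK : (LinearMap.ker f) →ₗ[R] (Fin (k' 0) → R))
      (d : ∀ n : ℕ, (Fin (k' n) → R) →ₗ[R] (Fin (k' (n + 1)) → R)),
      Function.Injective fK ∧ LinearMap.ker (d 0) = LinearMap.range fK ∧
      ∀ n : ℕ, LinearMap.ker (d (n + 1)) = LinearMap.range (d n) := by
  set φ := phiMap x k m fb db f with hφ
  choose A hA using fun n => lift_exists (Ideal.span {x}) (pfun k m n) (k n) (φ n)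
  set β := fun n => (φ n).coprod (pbarMap (Ideal.span {x}) (k n)) with hβ
  have hmkx : Ideal.Quotient.mk (Ideal.span {x}) x = 0 :=
    Ideal.Quotient.eq_zero_iff_mem.mpr (Ideal.mem_span_singleton_self x)
  have hpbx : ∀ n (z : Fin (k n) → R), pbarMap (Ideal.span {x}) (k n) (x • z) = 0 := by
    intro n z; funext i
    show Ideal.Quotient.mk (Ideal.span {x}) (x * z i) = 0
    rw [map_mul, hmkx, zero_mul]
  have hAap : ∀ n a, pbarMap (Ideal.span {x}) (k n) (A n a) = φ n a := fun n a => by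
    rw [← LinearMap.comp_apply, hA n]
  have hS : ∀ n (w : Fin (k n) → R ⧸ Ideal.span {x}), db n w = 0 ↔ ∃ a, φ n a = w := by
    intro n w
    cases n with
    | zero =>
      rw [show (db 0 w = 0) ↔ w ∈ LinearMap.ker (db 0) from Iff.rfl, h0]
      constructor
      · rintro ⟨y, hy⟩
        obtain ⟨a, ha⟩ := hf y
        exact ⟨a, by show fb (f a) = w; rw [ha]; exact hy⟩
      · rintro ⟨a, ha⟩; exact ⟨f a, ha⟩
    | succ n =>
      rw [show (db (n+1) w = 0) ↔ w ∈ LinearMap.ker (db (n+1)) from Iff.rfl, hd n]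
      constructor
      · rintro ⟨u, hu⟩
        obtain ⟨a, ha⟩ := pbarMap_surjective (Ideal.span {x}) (k n) u
        exact ⟨a, by show db n (pbarMap (Ideal.span {x}) (k n) a) = w; rw [ha]; exact hu⟩
      · rintro ⟨a, ha⟩; exact ⟨pbarMap (Ideal.span {x}) (k n) a, ha⟩
  have hT : ∀ n a, db n (φ n a) = 0 := fun n a => (hS n _).mpr ⟨a, rfl⟩
  set ψ := fun n => LinearMap.prod (LinearMap.fst R (Fin (pfun k m n) → R) (Fin (k n) → R))
    (x • LinearMap.snd R (Fin (pfun k m n) → R) (Fin (k n) → R) -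
      (A n).comp (LinearMap.fst R (Fin (pfun k m n) → R) (Fin (k n) → R))) with hψ
  have hψap : ∀ n (a : Fin (pfun k m n) → R) (z : Fin (k n) → R),
      ψ n (a, z) = (a, x • z - A n a) := fun n a z => rfl
  have hψinj : ∀ n, Function.Injective (ψ n) := by
    intro n u v huv
    obtain ⟨u1, u2⟩ := u
    obtain ⟨v1, v2⟩ := v
    rw [hψap, hψap] at huv
    obtain ⟨h1, h2⟩ := Prod.ext_iff.mp huv
    dsimp only at h1 h2
    subst h1
    have h3 : x • u2 = x • v2 := sub_left_inj.mp h2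
    refine Prod.ext_iff.mpr ⟨rfl, funext fun i => ?_⟩
    exact (mul_cancel_left_mem_nonZeroDivisors hreg).mp (congrFun h3 i)
  have hβψ : ∀ n u, β n (ψ n u) = 0 := by
    intro n u
    obtain ⟨a, z⟩ := u
    rw [hψap]
    show φ n a + pbarMap (Ideal.span {x}) (k n) (x • z - A n a) = 0
    rw [map_sub, hpbx, hAap, zero_sub, add_neg_cancel]
  have hψrange : ∀ n, LinearMap.range (ψ n) = LinearMap.ker (β n) := by
    intro n; ext w
    simp only [LinearMap.mem_range, LinearMap.mem_ker]
    constructor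
    · rintro ⟨u, rfl⟩; exact hβψ n u
    · intro hw
      obtain ⟨a, c⟩ := w
      have hw' : φ n a + pbarMap (Ideal.span {x}) (k n) c = 0 := hw
      have hmem : ∀ i, (A n a + c) i ∈ Ideal.span {x} := by
        intro i
        have hz : pbarMap (Ideal.span {x}) (k n) (A n a + c) = 0 := by
          rw [map_add, hAap, hw']
        exact Ideal.Quotient.eq_zero_iff_mem.mp (congrFun hz i)
      choose z hz using fun i => Ideal.mem_span_singleton'.mp (hmem i)
      refine ⟨(a, z), ?_⟩
      rw [hψap]
      refine Prod.ext_iff.mpr ⟨rfl, funext fun i => ?_⟩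
      show x * z i - (A n a) i = c i
      rw [mul_comm, hz i]
      exact add_sub_cancel_left _ _
  set G := fun n => (funSplit (pfun k m n) (k n)).trans
    ((LinearEquiv.ofInjective (ψ n) (hψinj n)).trans
      (LinearEquiv.ofEq _ _ (hψrange n))) with hG
  have htmem : ∀ n (w : LinearMap.ker (β n)),
      ((w.val.2 : Fin (k n) → R), (0 : Fin (k (n+1)) → R)) ∈ LinearMap.ker (β (n+1)) := by
    intro n w
    obtain ⟨⟨a, c⟩, hw⟩ := w
    have hw' : φ n a + pbarMap (Ideal.span {x}) (k n) c = 0 := hw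
    show φ (n+1) c + pbarMap (Ideal.span {x}) (k (n+1)) 0 = 0
    rw [map_zero, add_zero]
    show db n (pbarMap (Ideal.span {x}) (k n) c) = 0
    have hc : pbarMap (Ideal.span {x}) (k n) c = - φ n a := eq_neg_of_add_eq_zero_right hw'
    rw [hc, map_neg, hT, neg_zero]
  set t := fun n => LinearMap.codRestrict (LinearMap.ker (β (n+1)))
    ((LinearMap.inl R (Fin (k n) → R) (Fin (k (n+1)) → R)).comp
      ((LinearMap.snd R (Fin (pfun k m n) → R) (Fin (k n) → R)).comp
        (Submodule.subtype (LinearMap.ker (β n))))) (fun w => htmem n w) with ht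
  have htval : ∀ n (w : LinearMap.ker (β n)), (t n w).val = (w.val.2, 0) :=
    fun n w => rfl
  have hj0mem : ∀ a : LinearMap.ker f,
      ((a.val : Fin m → R), (0 : Fin (k 0) → R)) ∈ LinearMap.ker (β 0) := by
    intro a
    show φ 0 a.val + pbarMap (Ideal.span {x}) (k 0) 0 = 0
    rw [map_zero, add_zero]
    show fb (f a.val) = 0
    rw [a.2, map_zero]
  set j0 := LinearMap.codRestrict (LinearMap.ker (β 0))
    ((LinearMap.inl R (Fin m → R) (Fin (k 0) → R)).comp
      (Submodule.subtype (LinearMap.ker f))) hj0mem with hj0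
  have hj0val : ∀ a : LinearMap.ker f, (j0 a).val = (a.val, 0) := fun a => rfl
  have hC : ∀ n (w' : LinearMap.ker (β (n+1))), w'.val.2 = 0 →
      ∃ w : LinearMap.ker (β n), w'.val = (w.val.2, 0) := by
    intro n w' h2
    obtain ⟨⟨a, c⟩, hw⟩ := w'
    have h2' : c = 0 := h2
    subst h2'
    have hker : φ (n+1) a = 0 := by
      have hz : φ (n+1) a + pbarMap (Ideal.span {x}) (k (n+1)) 0 = 0 := hw
      rwa [map_zero, add_zero] at hz
    have hbn : db n (pbarMap (Ideal.span {x}) (k n) a) = 0 := hker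
    obtain ⟨a₀, ha₀⟩ := (hS n _).mp hbn
    refine ⟨⟨(-a₀, a), ?_⟩, rfl⟩
    show φ n (-a₀) + pbarMap (Ideal.span {x}) (k n) a = 0
    rw [map_neg, ha₀, neg_add_cancel]
  refine ⟨fun n => pfun k m n + k n, (G 0).symm.toLinearMap.comp j0,
    fun n => (G (n+1)).symm.toLinearMap.comp ((t n).comp (G n).toLinearMap), ?_, ?_, ?_⟩
  · refine (G 0).symm.injective.comp fun a b hab => Subtype.ext ?_
    have h := congrArg Subtype.val (hab : j0 a = j0 b)
    rw [hj0val, hj0val] at h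
    exact congrArg Prod.fst h
  · ext v
    simp only [LinearMap.mem_ker, LinearMap.mem_range, LinearMap.comp_apply,
      LinearEquiv.coe_coe]
    constructor
    · intro h
      have h1 : t 0 (G 0 v) = 0 := (LinearEquiv.map_eq_zero_iff (G 1).symm).mp h
      have h2 : (G 0 v).val.2 = 0 := by
        have h'' := congrArg Subtype.val h1
        rw [htval] at h''
        exact congrArg Prod.fst h''
      have hker0 : φ 0 (G 0 v).val.1 = 0 := by
        have hz : φ 0 (G 0 v).val.1 +
            pbarMap (Ideal.span {x}) (k 0) ((G 0 v).val.2) = 0 := (G 0 v).2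
        rwa [h2, map_zero, add_zero] at hz
      have hfz : f (G 0 v).val.1 = 0 := by
        apply hfb
        rw [map_zero]
        exact hker0
      refine ⟨⟨(G 0 v).val.1, hfz⟩, ?_⟩
      rw [LinearEquiv.symm_apply_eq]
      apply Subtype.ext
      rw [hj0val]
      exact Prod.ext_iff.mpr ⟨rfl, h2.symm⟩
    · rintro ⟨a, rfl⟩
      rw [LinearEquiv.apply_symm_apply, LinearEquiv.map_eq_zero_iff]
      apply Subtype.ext
      rw [htval]
      have h2 : (j0 a).val.2 = 0 := congrArg Prod.snd (hj0val a)
      rw [h2]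
      rfl
  · intro n
    ext v
    simp only [LinearMap.mem_ker, LinearMap.mem_range, LinearMap.comp_apply,
      LinearEquiv.coe_coe]
    constructor
    · intro h
      have h1 : t (n+1) (G (n+1) v) = 0 := (LinearEquiv.map_eq_zero_iff (G (n+2)).symm).mp h
      have h2 : (G (n+1) v).val.2 = 0 := by
        have h'' := congrArg Subtype.val h1
        rw [htval] at h''
        exact congrArg Prod.fst h''
      obtain ⟨w, hw⟩ := hC n (G (n+1) v) h2
      refine ⟨(G n).symm w, ?_⟩
      rw [LinearEquiv.apply_symm_apply, LinearEquiv.symm_apply_eq]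
      apply Subtype.ext
      rw [htval]
      exact hw.symm
    · rintro ⟨u, rfl⟩
      rw [LinearEquiv.apply_symm_apply, LinearEquiv.map_eq_zero_iff]
      apply Subtype.ext
      rw [htval]
      have h2 : (t n (G n u)).val.2 = 0 := congrArg Prod.snd (htval n (G n u))
      rw [h2]
      rfl

end main

end Stmt19Aux

/-- if `M` is an ∞-syzygy over `R/(x)` for a regular element `x ∈ 𝔪`,
then the first (minimal) syzygy `Ω_R M` is an ∞-syzygy over `R`. -/




theorem stmt19 (R : Type) [CommRing R] [IsLocalRing R] [IsNoetherianRing R]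
    (x : R) (hx : x ∈ maximalIdeal R) (hreg : x ∈ nonZeroDivisors R)
    (M : Type) [AddCommGroup M] [Module R M]
    [Module (R ⧸ Ideal.span {x}) M] [IsScalarTower R (R ⧸ Ideal.span {x}) M]
    (hsyz : IsInfiniteSyzygy (R ⧸ Ideal.span {x}) M)
    (K : ModuleCat.{0} R) (hK : IsMinimalSyzygy R 1 (ModuleCat.of R M) K) :
    IsInfiniteSyzygy R K := by
  obtain ⟨hfin, k, fb, db, hinj, h0, hd⟩ := hsyz
  have hK' : ∃ (m : ℕ) (f : (Fin m → R) →ₗ[R] (ModuleCat.of R M)),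
      Function.Surjective f ∧
      (LinearMap.ker f ≤ (maximalIdeal R) • (⊤ : Submodule R (Fin m → R))) ∧
      IsMinimalSyzygy R 0 (ModuleCat.of R (LinearMap.ker f)) K := hK
  obtain ⟨m, f, hfsurj, -, hK0⟩ := hK'
  have hf' : (f : (Fin m → R) →ₗ[R] M) = f := rfl
  obtain ⟨e⟩ : Nonempty (K ≃ₗ[R] LinearMap.ker (f : (Fin m → R) →ₗ[R] M)) := hK0
  obtain ⟨k', fK, d, hfKinj, hker0, hkerd⟩ :=
    Stmt19Aux.aux x k m fb db f hreg hinj h0 hd hfsurj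
  refine ⟨Module.Finite.equiv e.symm, k', fK.comp e.toLinearMap, d, ?_, ?_, hkerd⟩
  · exact hfKinj.comp e.injective
  · rw [hker0, LinearMap.range_comp, LinearEquiv.range, Submodule.map_top]
end
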